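/- arXiv:2408.00277 — 3 statements merged into one kernel-verified Lean document; each statement's English description precedes it below -/
import Mathlib

section
/- Stochastic monotonicity of exit times for biased random walk (decreasing branch): Let 1/2 ≤ p₁ < p₂ < 1, and let S^{p₁} and S^{p₂} be biased simple random walks started at 0 with up-step probabilities p₁ and p₂ respectively. For k a positive integer, let σ_{p}^{k} = inf{n : S_n^{p} ∈ {k, -k}} be the exit time from (-k, k). Then for every n ∈ ℕ, ℙ(σ_{p₁}^{k} > n) ≥ ℙ(σ_{p₂}^{k} > n); that is, σ_{p₁}^{k} stochastically dominates σ_{p₂}^{k}. -/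
open MeasureTheory ProbabilityTheory

/-- The partial-sum (random walk) process associated to a step process `X`. -/
noncomputable def walk {Ω : Type*} (X : ℕ → Ω → ℤ) (n : ℕ) (ω : Ω) : ℤ :=
  ∑ j ∈ Finset.range n, X j ω

/-- The exit time `σ = inf {n : S_n = ±k}` of the walk from `(-k, k)`, valued in `ℕ∞`
(with `inf ∅ = ⊤`). -/
noncomputable def exitTime {Ω : Type*} (X : ℕ → Ω → ℤ) (k : ℕ) (ω : Ω) : ℕ∞ :=
  sInf {t : ℕ∞ | ∃ m : ℕ, t = (m : ℕ∞) ∧ (walk X m ω = (k : ℤ) ∨ walk X m ω = -(k : ℤ))}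

/-- `X` is a sequence of i.i.d. `±1`-valued steps with `P(X_i = 1) = p` and
`P(X_i = -1) = 1 - p`. -/
def IsBiasedWalkSteps {Ω : Type*} [MeasurableSpace Ω] (P : Measure Ω)
    (X : ℕ → Ω → ℤ) (p : ℝ) : Prop :=
  (∀ i, Measurable (X i)) ∧
  iIndepFun X P ∧
  (∀ i, P {ω | X i ω = 1} = ENNReal.ofReal p) ∧
  (∀ i, P {ω | X i ω = -1} = ENNReal.ofReal (1 - p))

/-!
Conditionally on the path of `|S|` up to a time where `|S| = m ≥ 1`, the walk sits at `+m` or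
at `-m` with odds `p ^ m : (1 - p) ^ m`. Hence `|S|` is a birth–death chain on `ℕ`, pushed up
from `0` and moving up from `m ≥ 1` with probability
`ρ_p m = (p ^ (m + 1) + (1 - p) ^ (m + 1)) / (p ^ m + (1 - p) ^ m)`, and `σ_p^k` is its hitting
time of `k`. Since `m ↦ p ^ m + (1 - p) ^ m` is log-convex, `ρ_p` is nondecreasing, so the
chain's survival probabilities decrease in the starting point; and `ρ_p m` increases with
`p ≥ 1/2`. An induction on the horizon then shows that the chain with the pointwise smaller
up-probabilities survives longer. The survival probability of the walk itself is computed by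
first-step analysis, the first step being independent of the later ones.
-/

theorem convex_comb_le_convex_comb {r r' x x' y y' : ℝ} (hr : r ≤ r') (hr'₀ : 0 ≤ r')
    (hr'₁ : r' ≤ 1) (hx : x' ≤ x) (hy : y' ≤ y) (hxy : x ≤ y) :
    r' * x' + (1 - r') * y' ≤ r * x + (1 - r) * y := by
  nlinarith

theorem Int.abs_lt_of_forall_abs_ne {s : ℕ → ℤ} {k : ℤ} {n : ℕ}
    (hs : ∀ m, |s (m + 1) - s m| ≤ 1) (h₀ : |s 0| < k) (h : ∀ m ≤ n, |s m| ≠ k) :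
    ∀ m ≤ n, |s m| < k := by
  intro m hm
  induction m with
  | zero => exact h₀
  | succ m ih =>
    have := abs_sub_abs_le_abs_sub (s (m + 1)) (s m)
    exact lt_of_le_of_ne (by linarith [hs m, ih (by omega)]) (h (m + 1) hm)

theorem MeasureTheory.measure_eq_inter_add_inter {Ω : Type*} {mΩ : MeasurableSpace Ω}
    {P : Measure Ω} {s t₁ t₂ : Set Ω} (ht₁ : MeasurableSet t₁) (hdisj : Disjoint t₁ t₂)
    (hcover : ∀ᵐ ω ∂P, ω ∈ t₁ ∨ ω ∈ t₂) :
    P s = P (s ∩ t₁) + P (s ∩ t₂) := by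
  rw [← measure_inter_add_sdiff s ht₁]
  congr 1
  refine measure_congr (Filter.eventuallyEq_set.2 ?_)
  filter_upwards [hcover] with ω hω
  have := Set.disjoint_left.1 hdisj
  simp only [Set.mem_sdiff, Set.mem_inter_iff]
  tauto

namespace BirthDeath

/-- Probability that the chain started at `m`, which moves from `0` to `1` and from `m ≥ 1` up
with probability `r m` and down otherwise, stays below `k` up to time `n` (`r 0` is unused). -/
noncomputable def survival (r : ℕ → ℝ) (k : ℕ) : ℕ → ℕ → ℝ
  | 0, m => if m < k then 1 else 0
  | n + 1, 0 => survival r k n 1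
  | n + 1, m + 1 =>
    if m + 1 < k then r (m + 1) * survival r k n (m + 2) + (1 - r (m + 1)) * survival r k n m
    else 0

variable {r r' : ℕ → ℝ} {k : ℕ}

theorem survival_succ_succ_of_lt {n m : ℕ} (hm : m + 1 < k) :
    survival r k (n + 1) (m + 1) =
      r (m + 1) * survival r k n (m + 2) + (1 - r (m + 1)) * survival r k n m := by
  simp [survival, hm]

theorem survival_succ_succ_of_le {n m : ℕ} (hm : k ≤ m + 1) :
    survival r k (n + 1) (m + 1) = 0 := by
  simp [survival, hm.not_gt]

section UnitInterval

variable (hr₀ : ∀ m, 0 ≤ r m) (hr₁ : ∀ m, r m ≤ 1)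
include hr₀ hr₁

theorem survival_nonneg (n m : ℕ) : 0 ≤ survival r k n m := by
  induction n generalizing m with
  | zero => unfold survival; split_ifs <;> norm_num
  | succ n ih =>
    cases m with
    | zero => exact ih 1
    | succ m =>
      rcases lt_or_ge (m + 1) k with h | h
      · rw [survival_succ_succ_of_lt h]
        exact add_nonneg (mul_nonneg (hr₀ _) (ih _)) (mul_nonneg (sub_nonneg.2 (hr₁ _)) (ih _))
      · rw [survival_succ_succ_of_le h]

theorem survival_succ_le (hk : 0 < k) (n m : ℕ) :
    survival r k (n + 1) m ≤ survival r k n m := by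
  induction n generalizing m with
  | zero =>
    cases m with
    | zero => simp only [survival]; split_ifs <;> norm_num
    | succ m =>
      simp only [survival]
      split_ifs <;> nlinarith [hr₀ (m + 1), hr₁ (m + 1)]
  | succ n ih =>
    cases m with
    | zero => exact ih 1
    | succ m =>
      rcases lt_or_ge (m + 1) k with h | h
      · rw [survival_succ_succ_of_lt h, survival_succ_succ_of_lt h]
        exact add_le_add (mul_le_mul_of_nonneg_left (ih _) (hr₀ _))
          (mul_le_mul_of_nonneg_left (ih _) (sub_nonneg.2 (hr₁ _)))
      · rw [survival_succ_succ_of_le h, survival_succ_succ_of_le h]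

theorem survival_succ_right_le (hr : Monotone r) (hk : 0 < k) (n m : ℕ) :
    survival r k n (m + 1) ≤ survival r k n m := by
  induction n generalizing m with
  | zero =>
    simp only [survival]
    split_ifs <;> norm_num
    omega
  | succ n ih =>
    cases m with
    | zero => exact survival_succ_le hr₀ hr₁ hk n 1
    | succ m =>
      rcases lt_or_ge (m + 2) k with h | h
      · rw [survival_succ_succ_of_lt h, survival_succ_succ_of_lt (by omega)]
        exact convex_comb_le_convex_comb (hr (by omega)) (hr₀ _) (hr₁ _) (ih (m + 2))
          (ih m) ((ih (m + 1)).trans (ih m))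
      · rw [survival_succ_succ_of_le h]
        exact survival_nonneg hr₀ hr₁ (n + 1) (m + 1)

theorem survival_le_survival_of_le (hr : Monotone r) (hr'₀ : ∀ m, 0 ≤ r' m)
    (hr'₁ : ∀ m, r' m ≤ 1) (hrr' : r ≤ r') (hk : 0 < k) (n m : ℕ) :
    survival r' k n m ≤ survival r k n m := by
  induction n generalizing m with
  | zero => rfl
  | succ n ih =>
    cases m with
    | zero => exact ih 1
    | succ m =>
      rcases lt_or_ge (m + 1) k with h | h
      · rw [survival_succ_succ_of_lt h, survival_succ_succ_of_lt h]
        exact convex_comb_le_convex_comb (hrr' _) (hr'₀ _) (hr'₁ _) (ih (m + 2)) (ih m)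
          ((survival_succ_right_le hr₀ hr₁ hr hk n (m + 1)).trans
            (survival_succ_right_le hr₀ hr₁ hr hk n m))
      · rw [survival_succ_succ_of_le h, survival_succ_succ_of_le h]

end UnitInterval

end BirthDeath

namespace IsBiasedWalkSteps

variable {Ω : Type*} {mΩ : MeasurableSpace Ω} {P : Measure Ω} {X : ℕ → Ω → ℤ} {p : ℝ}

theorem shift (hX : IsBiasedWalkSteps P X p) : IsBiasedWalkSteps P (fun i => X (i + 1)) p :=
  ⟨fun i => hX.1 (i + 1), hX.2.1.precomp (add_left_injective 1), fun i => hX.2.2.1 (i + 1),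
    fun i => hX.2.2.2 (i + 1)⟩

theorem ae_step [IsProbabilityMeasure P] (hX : IsBiasedWalkSteps P X p) (hp₀ : 0 ≤ p)
    (hp₁ : p ≤ 1) : ∀ᵐ ω ∂P, ∀ i, X i ω = 1 ∨ X i ω = -1 := by
  refine ae_all_iff.2 fun i => ?_
  have hmeas (s : ℤ) : MeasurableSet {ω | X i ω = s} := hX.1 i (measurableSet_singleton s)
  rw [ae_iff_measure_eq (by exact ((hmeas 1).union (hmeas (-1))).nullMeasurableSet), Set.ofPred_or,
    measure_union _ (hmeas (-1)), hX.2.2.1, hX.2.2.2, ← ENNReal.ofReal_add hp₀ (by linarith)]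
  · simp
  · exact Set.disjoint_left.2 fun ω (h₁ : X i ω = 1) (h₂ : X i ω = -1) => by omega

end IsBiasedWalkSteps

namespace BiasedWalk

noncomputable def survivalProb (p : ℝ) (k : ℕ) : ℕ → ℤ → ℝ
  | 0, x => if |x| < k then 1 else 0
  | n + 1, x =>
    if |x| < k then p * survivalProb p k n (x + 1) + (1 - p) * survivalProb p k n (x - 1) else 0

noncomputable def foldedUpProb (p : ℝ) (m : ℕ) : ℝ :=
  (p ^ (m + 1) + (1 - p) ^ (m + 1)) / (p ^ m + (1 - p) ^ m)

section Deterministic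

variable {p : ℝ} {k : ℕ}

theorem pow_add_one_sub_pow_pos (hp₀ : 0 ≤ p) (hp₁ : p ≤ 1) (m : ℕ) :
    0 < p ^ m + (1 - p) ^ m := by
  rcases hp₀.eq_or_lt with rfl | hp
  · exact add_pos_of_nonneg_of_pos (pow_nonneg le_rfl m) (by simp)
  · have := pow_nonneg (sub_nonneg.2 hp₁) m
    positivity

theorem foldedUpProb_nonneg (hp₀ : 0 ≤ p) (hp₁ : p ≤ 1) (m : ℕ) : 0 ≤ foldedUpProb p m := by
  have := pow_nonneg (sub_nonneg.2 hp₁) m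
  unfold foldedUpProb
  positivity

theorem foldedUpProb_le_one (hp₀ : 0 ≤ p) (hp₁ : p ≤ 1) (m : ℕ) : foldedUpProb p m ≤ 1 := by
  rw [foldedUpProb, div_le_one (pow_add_one_sub_pow_pos hp₀ hp₁ m)]
  gcongr ?_ + ?_
  · exact pow_le_pow_of_le_one hp₀ hp₁ m.le_succ
  · exact pow_le_pow_of_le_one (sub_nonneg.2 hp₁) (by linarith) m.le_succ

theorem foldedUpProb_monotone (hp₀ : 0 ≤ p) (hp₁ : p ≤ 1) : Monotone (foldedUpProb p) := by
  refine monotone_nat_of_le_succ fun m => ?_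
  rw [foldedUpProb, foldedUpProb, div_le_div_iff₀ (pow_add_one_sub_pow_pos hp₀ hp₁ m)
    (pow_add_one_sub_pow_pos hp₀ hp₁ (m + 1))]
  have hq := sub_nonneg.2 hp₁
  have hconvex : (p ^ (m + 1 + 1) + (1 - p) ^ (m + 1 + 1)) * (p ^ m + (1 - p) ^ m)
      - (p ^ (m + 1) + (1 - p) ^ (m + 1)) * (p ^ (m + 1) + (1 - p) ^ (m + 1))
      = p ^ m * (1 - p) ^ m * (p - (1 - p)) ^ 2 := by
    ring
  have : 0 ≤ p ^ m * (1 - p) ^ m * (p - (1 - p)) ^ 2 := by positivity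
  linarith

theorem foldedUpProb_le_foldedUpProb {p₁ p₂ : ℝ} (h₁ : 1 / 2 ≤ p₁) (h₁₂ : p₁ ≤ p₂)
    (h₂ : p₂ ≤ 1) : foldedUpProb p₁ ≤ foldedUpProb p₂ := by
  intro m
  rw [foldedUpProb, foldedUpProb,
    div_le_div_iff₀ (pow_add_one_sub_pow_pos (by linarith) (by linarith) m)
      (pow_add_one_sub_pow_pos (by linarith) h₂ m)]
  have hdiff : (p₂ ^ (m + 1) + (1 - p₂) ^ (m + 1)) * (p₁ ^ m + (1 - p₁) ^ m)
      - (p₁ ^ (m + 1) + (1 - p₁) ^ (m + 1)) * (p₂ ^ m + (1 - p₂) ^ m)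
      = (p₂ - p₁) * ((p₁ * p₂) ^ m - ((1 - p₁) * (1 - p₂)) ^ m)
        + (p₁ + p₂ - 1) * ((p₂ * (1 - p₁)) ^ m - (p₁ * (1 - p₂)) ^ m) := by
    simp only [mul_pow]
    ring
  have t₁ : ((1 - p₁) * (1 - p₂)) ^ m ≤ (p₁ * p₂) ^ m :=
    pow_le_pow_left₀ (mul_nonneg (by linarith) (by linarith)) (by nlinarith) m
  have t₂ : (p₁ * (1 - p₂)) ^ m ≤ (p₂ * (1 - p₁)) ^ m :=
    pow_le_pow_left₀ (mul_nonneg (by linarith) (by linarith)) (by nlinarith) m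
  have := mul_nonneg (sub_nonneg.2 h₁₂) (sub_nonneg.2 t₁)
  have := mul_nonneg (show 0 ≤ p₁ + p₂ - 1 by linarith) (sub_nonneg.2 t₂)
  linarith

theorem survivalProb_nonneg (hp₀ : 0 ≤ p) (hp₁ : p ≤ 1) (n : ℕ) (x : ℤ) :
    0 ≤ survivalProb p k n x := by
  induction n generalizing x with
  | zero => unfold survivalProb; split_ifs <;> norm_num
  | succ n ih =>
    unfold survivalProb
    split_ifs
    · exact add_nonneg (mul_nonneg hp₀ (ih _)) (mul_nonneg (sub_nonneg.2 hp₁) (ih _))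
    · rfl

-- The step `m + 1 → m + 2, m` uses `N (m + 1) - N (m + 2) = p (1 - p) N m` for
-- `N m = p ^ m + (1 - p) ^ m`.
theorem pow_mul_survivalProb_add_pow_mul_survivalProb_neg (hp₀ : 0 ≤ p) (hp₁ : p ≤ 1)
    (hk : 0 < k) (n m : ℕ) :
    p ^ m * survivalProb p k n m + (1 - p) ^ m * survivalProb p k n (-m) =
      (p ^ m + (1 - p) ^ m) * BirthDeath.survival (foldedUpProb p) k n m := by
  induction n generalizing m with
  | zero => simp only [survivalProb, BirthDeath.survival]; split_ifs <;> simp_all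
  | succ n ih =>
    cases m with
    | zero =>
      have := ih 1
      simp_all [survivalProb, BirthDeath.survival]
      linarith
    | succ j =>
      rcases lt_or_ge (j + 1) k with h | h
      · have hN := pow_add_one_sub_pow_pos hp₀ hp₁ (j + 1)
        have hpos : |((j + 1 : ℕ) : ℤ)| < k := by rw [abs_of_nonneg (by positivity)]; omega
        have hneg : |-((j + 1 : ℕ) : ℤ)| < k := by rwa [abs_neg]
        rw [BirthDeath.survival_succ_succ_of_lt h, foldedUpProb, survivalProb, survivalProb,
          if_pos hpos, if_pos hneg]
        have e₂ := ih (j + 2)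
        have e₀ := ih j
        push_cast at e₂ e₀ ⊢
        field_simp
        rw [show (j : ℤ) + 1 + 1 = j + 2 by ring, show (j : ℤ) + 1 - 1 = j by ring,
          show -((j : ℤ) + 1) + 1 = -j by ring, show -((j : ℤ) + 1) - 1 = -(j + 2) by ring]
        linear_combination e₂ + p * (1 - p) * e₀
      · have hpos : ¬|((j + 1 : ℕ) : ℤ)| < k := by rw [abs_of_nonneg (by positivity)]; omega
        have hneg : ¬|-((j + 1 : ℕ) : ℤ)| < k := by rwa [abs_neg]
        rw [BirthDeath.survival_succ_succ_of_le h, survivalProb, survivalProb, if_neg hpos,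
          if_neg hneg]
        ring

theorem survivalProb_origin_eq_survival (hp₀ : 0 ≤ p) (hp₁ : p ≤ 1) (hk : 0 < k) (n : ℕ) :
    survivalProb p k n 0 = BirthDeath.survival (foldedUpProb p) k n 0 := by
  have := pow_mul_survivalProb_add_pow_mul_survivalProb_neg hp₀ hp₁ hk n 0
  norm_num at this
  linarith

theorem survivalProb_origin_le {p₁ p₂ : ℝ} (h₁ : 1 / 2 ≤ p₁) (h₁₂ : p₁ ≤ p₂) (h₂ : p₂ ≤ 1)
    (hk : 0 < k) (n : ℕ) : survivalProb p₂ k n 0 ≤ survivalProb p₁ k n 0 := by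
  have hp₁ : 0 ≤ p₁ := by linarith
  have hp₁' : p₁ ≤ 1 := by linarith
  have hp₂ : 0 ≤ p₂ := by linarith
  rw [survivalProb_origin_eq_survival hp₂ h₂ hk, survivalProb_origin_eq_survival hp₁ hp₁' hk]
  exact BirthDeath.survival_le_survival_of_le (foldedUpProb_nonneg hp₁ hp₁')
    (foldedUpProb_le_one hp₁ hp₁') (foldedUpProb_monotone hp₁ hp₁')
    (foldedUpProb_nonneg hp₂ h₂) (foldedUpProb_le_one hp₂ h₂)
    (foldedUpProb_le_foldedUpProb h₁ h₁₂ h₂) hk n 0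

end Deterministic

variable {Ω : Type*} {X : ℕ → Ω → ℤ} {k : ℕ}

def stayInside (X : ℕ → Ω → ℤ) (k : ℕ) (x : ℤ) (n : ℕ) : Set Ω :=
  {ω | ∀ m ≤ n, |x + walk X m ω| < k}

theorem walk_zero (ω : Ω) : walk X 0 ω = 0 := rfl

theorem walk_succ (m : ℕ) (ω : Ω) : walk X (m + 1) ω = walk X m ω + X m ω :=
  Finset.sum_range_succ _ _

theorem walk_succ' (m : ℕ) (ω : Ω) :
    walk X (m + 1) ω = X 0 ω + walk (fun i => X (i + 1)) m ω := by
  rw [walk, Finset.sum_range_succ', add_comm, walk]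

theorem mem_stayInside_succ {x : ℤ} {n : ℕ} {ω : Ω} :
    ω ∈ stayInside X k x (n + 1) ↔
      |x| < k ∧ ω ∈ stayInside (fun i => X (i + 1)) k (x + X 0 ω) n := by
  simp only [stayInside, Set.mem_ofPred_eq]
  constructor
  · intro h
    refine ⟨by simpa [walk_zero] using h 0 (Nat.zero_le _), fun m hm => ?_⟩
    simpa [walk_succ', add_assoc] using h (m + 1) (by omega)
  · rintro ⟨h₀, h⟩ (_ | m) hm
    · simpa [walk_zero] using h₀
    · simpa [walk_succ', add_assoc] using h m (by omega)

theorem lt_exitTime_iff {n : ℕ} {ω : Ω} :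
    (n : ℕ∞) < exitTime X k ω ↔ ∀ m ≤ n, |walk X m ω| ≠ k := by
  rw [exitTime, ← ENat.add_one_le_iff (ENat.natCast_ne_top n), le_sInf_iff]
  constructor
  · rintro h m hm hm'
    have := h m ⟨m, rfl, (abs_eq (by positivity)).1 hm'⟩
    norm_cast at this
    omega
  · rintro h _ ⟨m, rfl, hm⟩
    have : ¬m ≤ n := fun hmn => h m hmn ((abs_eq (by positivity)).2 hm)
    norm_cast
    omega

theorem measurableSet_stayInside {mΩ : MeasurableSpace Ω} (hX : ∀ i, Measurable (X i))
    (x : ℤ) (n : ℕ) : MeasurableSet (stayInside X k x n) := by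
  have hwalk (m : ℕ) : Measurable (walk X m) := Finset.measurable_sum _ fun i _ => hX i
  simp only [stayInside, Set.ofPred_forall]
  exact MeasurableSet.iInter fun m => MeasurableSet.iInter fun _ =>
    (hwalk m) (MeasurableSet.of_discrete (s := {y : ℤ | |x + y| < k}))

section Measure

variable {mΩ : MeasurableSpace Ω} {P : Measure Ω} {p : ℝ}

theorem measure_step_zero_inter_stayInside (hmeas : ∀ i, Measurable (X i))
    (hind : iIndepFun X P) (s y : ℤ) (n : ℕ) :
    P ({ω | X 0 ω = s} ∩ stayInside (fun i => X (i + 1)) k y n) =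
      P {ω | X 0 ω = s} * P (stayInside (fun i => X (i + 1)) k y n) := by
  have hindep := indep_iSup_of_disjoint (fun i => (hmeas i).comap_le)
    ((iIndepFun_iff_iIndep _ _ _).1 hind) (S := {0}) (T := Set.Ioi 0) (by simp)
  refine (Indep_iff _ _ _).1 hindep _ _ ?_ ?_
  · exact le_iSup₂ (f := fun i (_ : i ∈ ({0} : Set ℕ)) => MeasurableSpace.comap (X i) _)
      0 rfl _ ⟨{s}, measurableSet_singleton s, rfl⟩
  · refine measurableSet_stayInside (fun i => Measurable.of_comap_le ?_) y n
    exact le_iSup₂ (f := fun i (_ : i ∈ Set.Ioi 0) => MeasurableSpace.comap (X i) _)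
      (i + 1) i.succ_pos

theorem measure_stayInside [IsProbabilityMeasure P] (hp₀ : 0 ≤ p) (hp₁ : p ≤ 1) (n : ℕ) :
    ∀ X : ℕ → Ω → ℤ, IsBiasedWalkSteps P X p → ∀ x : ℤ,
      P (stayInside X k x n) = ENNReal.ofReal (survivalProb p k n x) := by
  induction n with
  | zero =>
    intro X _ x
    by_cases h : |x| < k
    · have : stayInside X k x 0 = Set.univ := by ext ω; simp [stayInside, walk_zero, h]
      simp [this, survivalProb, h]
    · have : stayInside X k x 0 = ∅ := by ext ω; simp [stayInside, walk_zero, h]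
      simp [this, survivalProb, h]
  | succ n ih =>
    intro X hX x
    by_cases h : |x| < k
    · have hstep (s : ℤ) : stayInside X k x (n + 1) ∩ {ω | X 0 ω = s} =
          {ω | X 0 ω = s} ∩ stayInside (fun i => X (i + 1)) k (x + s) n := by
        ext ω
        simp only [Set.mem_inter_iff, mem_stayInside_succ, Set.mem_ofPred_eq]
        constructor
        · rintro ⟨⟨-, hω⟩, rfl⟩; exact ⟨rfl, hω⟩
        · rintro ⟨rfl, hω⟩; exact ⟨⟨h, hω⟩, rfl⟩
      have hdisj : Disjoint {ω | X 0 ω = 1} {ω | X 0 ω = -1} :=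
        Set.disjoint_left.2 fun ω (h₁ : X 0 ω = 1) (h₂ : X 0 ω = -1) => by omega
      have hmeas (s : ℤ) : MeasurableSet {ω | X 0 ω = s} := hX.1 0 (measurableSet_singleton s)
      rw [measure_eq_inter_add_inter (hmeas 1) hdisj
          ((hX.ae_step hp₀ hp₁).mono fun ω hω => hω 0),
        hstep, hstep, measure_step_zero_inter_stayInside hX.1 hX.2.1,
        measure_step_zero_inter_stayInside hX.1 hX.2.1, ih _ hX.shift, ih _ hX.shift, hX.2.2.1,
        hX.2.2.2, survivalProb, if_pos h, ENNReal.ofReal_add, ENNReal.ofReal_mul hp₀,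
        ENNReal.ofReal_mul (sub_nonneg.2 hp₁), ← sub_eq_add_neg]
      · exact mul_nonneg hp₀ (survivalProb_nonneg hp₀ hp₁ n _)
      · exact mul_nonneg (sub_nonneg.2 hp₁) (survivalProb_nonneg hp₀ hp₁ n _)
    · have : stayInside X k x (n + 1) = ∅ := by ext ω; simp [mem_stayInside_succ, h]
      simp [this, survivalProb, h]

-- Steps are a.s. `±1`, so the walk cannot jump over `±k` and `{n < σ}` is a.s. `stayInside`.
theorem measure_lt_exitTime [IsProbabilityMeasure P] (hX : IsBiasedWalkSteps P X p)
    (hp₀ : 0 ≤ p) (hp₁ : p ≤ 1) (hk : 0 < k) (n : ℕ) :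
    P {ω | (n : ℕ∞) < exitTime X k ω} = ENNReal.ofReal (survivalProb p k n 0) := by
  rw [← measure_stayInside hp₀ hp₁ n X hX 0]
  refine measure_congr (Filter.eventuallyEq_set.2 ?_)
  filter_upwards [hX.ae_step hp₀ hp₁] with ω hω
  simp only [Set.mem_ofPred_eq, lt_exitTime_iff, stayInside, zero_add]
  refine ⟨Int.abs_lt_of_forall_abs_ne (fun m => ?_) (by simpa [walk_zero] using hk),
    fun h m hm => (h m hm).ne⟩
  rcases hω m with h | h <;> simp [walk_succ, h]

end Measure

end BiasedWalk

/-- For `1/2 ≤ p₁ < p₂ < 1`, the exit time of the `p₁`-biased random walk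
from `(-k, k)` stochastically dominates that of the `p₂`-biased walk:
`ℙ(σ_{p₁}^k > n) ≥ ℙ(σ_{p₂}^k > n)` for all `n`. -/
theorem rw_exit_time_stochastically_decreasing
    {Ω₁ Ω₂ : Type*} [MeasurableSpace Ω₁] [MeasurableSpace Ω₂]
    (P₁ : Measure Ω₁) (P₂ : Measure Ω₂)
    [IsProbabilityMeasure P₁] [IsProbabilityMeasure P₂]
    {p₁ p₂ : ℝ} (h₁ : 1 / 2 ≤ p₁) (h₁₂ : p₁ < p₂) (h₂ : p₂ < 1)
    (X₁ : ℕ → Ω₁ → ℤ) (X₂ : ℕ → Ω₂ → ℤ)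
    (hX₁ : IsBiasedWalkSteps P₁ X₁ p₁) (hX₂ : IsBiasedWalkSteps P₂ X₂ p₂)
    (k : ℕ) (hk : 0 < k) (n : ℕ) :
    P₂ {ω | (n : ℕ∞) < exitTime X₂ k ω} ≤ P₁ {ω | (n : ℕ∞) < exitTime X₁ k ω} := by
  rw [BiasedWalk.measure_lt_exitTime hX₂ (by linarith) h₂.le hk,
    BiasedWalk.measure_lt_exitTime hX₁ (by linarith) (by linarith) hk]
  exact ENNReal.ofReal_le_ofReal (BiasedWalk.survivalProb_origin_le h₁ h₁₂.le h₂.le hk n)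
end

section
/- Stochastic monotonicity of exit times for biased random walk (increasing branch): Let 0 < p₁ < p₂ ≤ 1/2, and let S^{p₁} and S^{p₂} be biased simple random walks started at 0 with up-step probabilities p₁ and p₂ respectively. For k a positive integer and σ_{p}^{k} = inf{n : S_n^{p} ∈ {k, -k}}, for every n ∈ ℕ one has ℙ(σ_{p₁}^{k} > n) ≤ ℙ(σ_{p₂}^{k} > n). -/
open MeasureTheory ProbabilityTheory

/-!
The absolute value `|S|` of the walk is itself a Markov chain: given `|S_n| = a > 0`, the walk
sits at `±a` with odds `p ^ a : (1 - p) ^ a`, so `|S|` steps up with probability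
`(p ^ (a + 1) + (1 - p) ^ (a + 1)) / (p ^ a + (1 - p) ^ a)`. Hence `ℙ(σ_p^k > n)` is the
`n`-step survival probability, from `0`, of a birth–death chain killed at `k`. (On the
probability side this is first-step analysis: `X₀` is independent of the later steps, which
are again i.i.d.) For `p ≤ 1/2` the up-probabilities of this chain increase with the state and
decrease with `p`; since survival of such a chain decreases with the starting state, an
induction on `n` shows that lowering the up-probabilities raises the survival probability.
-/

open Set

-- At `a = 0` the truncated `a - 1 = 0` makes a down-step a holding step.
noncomputable def birthDeathSurvival (r : ℕ → ℝ) (k : ℕ) : ℕ → ℕ → ℝ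
  | a, 0 => if a < k then 1 else 0
  | a, n + 1 =>
    if a < k then
      r a * birthDeathSurvival r k (a + 1) n + (1 - r a) * birthDeathSurvival r k (a - 1) n
    else 0

theorem convexComb_le_convexComb {r s x y x' y' : ℝ} (hr : 0 ≤ r) (hrs : r ≤ s) (hs : s ≤ 1)
    (hx : x' ≤ x) (hy : y' ≤ y) (hxy : x ≤ y) :
    s * x' + (1 - s) * y' ≤ r * x + (1 - r) * y := by
  nlinarith

section BirthDeath

variable {r r₁ r₂ : ℕ → ℝ} {k : ℕ}

theorem birthDeathSurvival_zero (a : ℕ) :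
    birthDeathSurvival r k a 0 = if a < k then 1 else 0 := by
  rw [birthDeathSurvival]

theorem birthDeathSurvival_succ {a : ℕ} (ha : a < k) (n : ℕ) :
    birthDeathSurvival r k a (n + 1) =
      r a * birthDeathSurvival r k (a + 1) n + (1 - r a) * birthDeathSurvival r k (a - 1) n := by
  rw [birthDeathSurvival, if_pos ha]

theorem birthDeathSurvival_of_le {a : ℕ} (ha : k ≤ a) (n : ℕ) : birthDeathSurvival r k a n = 0 := by
  cases n <;> simp [birthDeathSurvival, not_lt.2 ha]

theorem birthDeathSurvival_mem_Icc (hr : ∀ a, r a ∈ Icc 0 1) (n a : ℕ) :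
    birthDeathSurvival r k a n ∈ Icc 0 1 := by
  induction n generalizing a with
  | zero => rw [birthDeathSurvival_zero]; split_ifs <;> simp
  | succ n ih =>
    rcases lt_or_ge a k with ha | ha
    · rw [birthDeathSurvival_succ ha]
      exact convex_Icc 0 1 (ih _) (ih _) (hr a).1 (sub_nonneg.2 (hr a).2) (by ring)
    · simp [birthDeathSurvival_of_le ha]

theorem birthDeathSurvival_succ_le (hr : ∀ a, r a ∈ Icc 0 1) (n a : ℕ) :
    birthDeathSurvival r k a (n + 1) ≤ birthDeathSurvival r k a n := by
  induction n generalizing a with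
  | zero =>
    rcases lt_or_ge a k with ha | ha
    · rw [birthDeathSurvival_zero, if_pos ha]
      exact (birthDeathSurvival_mem_Icc hr 1 a).2
    · simp [birthDeathSurvival_of_le ha]
  | succ n ih =>
    rcases lt_or_ge a k with ha | ha
    · rw [birthDeathSurvival_succ ha, birthDeathSurvival_succ ha]
      have := (hr a).1
      have := sub_nonneg.2 (hr a).2
      gcongr <;> exact ih _
    · simp [birthDeathSurvival_of_le ha]

theorem birthDeathSurvival_antitone (hr : ∀ a, r a ∈ Icc 0 1) (hmono : MonotoneOn r (Ici 1))
    (n : ℕ) : Antitone (birthDeathSurvival r k · n) := by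
  induction n with
  | zero =>
    intro a b hab
    simp only [birthDeathSurvival_zero]
    split_ifs <;> first | omega | norm_num
  | succ n ih =>
    refine antitone_nat_of_succ_le fun a => ?_
    rcases lt_or_ge (a + 1) k with ha | ha
    · rcases Nat.eq_zero_or_pos a with rfl | ha₀
      · calc birthDeathSurvival r k 1 (n + 1) ≤ birthDeathSurvival r k 1 n :=
            birthDeathSurvival_succ_le hr n 1
          _ ≤ birthDeathSurvival r k 0 (n + 1) := by
            rw [birthDeathSurvival_succ (by omega), zero_add, Nat.zero_sub]
            nlinarith [ih zero_le_one, (hr 0).1, (hr 0).2]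
      · rw [birthDeathSurvival_succ ha, birthDeathSurvival_succ (by omega : a < k)]
        exact convexComb_le_convexComb (hr a).1 (hmono (mem_Ici.2 ha₀) (by simp) (by omega))
          (hr _).2 (ih (by omega)) (ih (by omega)) (ih (by omega))
    · rw [birthDeathSurvival_of_le ha]
      exact (birthDeathSurvival_mem_Icc hr _ _).1

theorem birthDeathSurvival_le_of_le (hr₁ : ∀ a, r₁ a ≤ 1) (hr₂ : ∀ a, r₂ a ∈ Icc 0 1)
    (hmono : MonotoneOn r₂ (Ici 1)) (h : r₂ ≤ r₁) (n a : ℕ) :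
    birthDeathSurvival r₁ k a n ≤ birthDeathSurvival r₂ k a n := by
  induction n generalizing a with
  | zero => simp only [birthDeathSurvival_zero, le_refl]
  | succ n ih =>
    rcases lt_or_ge a k with ha | ha
    · rw [birthDeathSurvival_succ ha, birthDeathSurvival_succ ha]
      exact convexComb_le_convexComb (hr₂ a).1 (h a) (hr₁ a) (ih _) (ih _)
        (birthDeathSurvival_antitone hr₂ hmono n (by omega))
    · simp [birthDeathSurvival_of_le ha]

end BirthDeath

noncomputable def absWalkUpProb (p : ℝ) (a : ℕ) : ℝ :=
  if a = 0 then 1 else (p ^ (a + 1) + (1 - p) ^ (a + 1)) / (p ^ a + (1 - p) ^ a)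

section AbsWalk

variable {p : ℝ}

theorem absWalkUpProb_of_ne_zero {a : ℕ} (ha : a ≠ 0) :
    absWalkUpProb p a = (p ^ (a + 1) + (1 - p) ^ (a + 1)) / (p ^ a + (1 - p) ^ a) :=
  if_neg ha

theorem absWalkUpProb_mem_Icc (hp₀ : 0 < p) (hp₁ : p < 1) (a : ℕ) :
    absWalkUpProb p a ∈ Icc 0 1 := by
  rcases eq_or_ne a 0 with rfl | ha
  · simp [absWalkUpProb]
  have hq : 0 < 1 - p := sub_pos.2 hp₁
  rw [absWalkUpProb_of_ne_zero ha, mem_Icc, div_le_one (by positivity)]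
  refine ⟨by positivity, add_le_add ?_ ?_⟩
  · exact pow_le_pow_of_le_one hp₀.le hp₁.le a.le_succ
  · exact pow_le_pow_of_le_one hq.le (by linarith) a.le_succ

theorem absWalkUpProb_monotoneOn (hp₀ : 0 < p) (hp₁ : p < 1) :
    MonotoneOn (absWalkUpProb p) (Ici 1) := by
  refine monotoneOn_nat_Ici_of_le_succ fun a ha => ?_
  have hq : 0 < 1 - p := sub_pos.2 hp₁
  rw [absWalkUpProb_of_ne_zero (by omega), absWalkUpProb_of_ne_zero (by omega),
    div_le_div_iff₀ (by positivity) (by positivity)]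
  simp only [pow_succ]
  nlinarith [mul_nonneg (mul_nonneg (pow_nonneg hp₀.le a) (pow_nonneg hq.le a))
    (sq_nonneg (p - (1 - p)))]

theorem absWalkUpProb_anti {p₁ p₂ : ℝ} (hp₁ : 0 < p₁) (h₁₂ : p₁ ≤ p₂) (hp₂ : p₂ ≤ 1 / 2) :
    absWalkUpProb p₂ ≤ absWalkUpProb p₁ := by
  intro a
  rcases eq_or_ne a 0 with rfl | ha
  · simp [absWalkUpProb]
  have hq₁ : 0 < 1 - p₁ := by linarith
  have hq₂ : 0 < 1 - p₂ := by linarith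
  have : 0 < p₂ := hp₁.trans_le h₁₂
  rw [absWalkUpProb_of_ne_zero ha, absWalkUpProb_of_ne_zero ha,
    div_le_div_iff₀ (by positivity) (by positivity)]
  have f₁ : p₁ ^ a * p₂ ^ a ≤ (1 - p₁) ^ a * (1 - p₂) ^ a := by
    rw [← mul_pow, ← mul_pow]
    exact pow_le_pow_left₀ (by positivity) (by nlinarith) a
  have f₂ : p₁ ^ a * (1 - p₂) ^ a ≤ (1 - p₁) ^ a * p₂ ^ a := by
    rw [← mul_pow, ← mul_pow]
    exact pow_le_pow_left₀ (by positivity) (by nlinarith) a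
  simp only [pow_succ]
  nlinarith [mul_nonneg (sub_nonneg.2 h₁₂) (sub_nonneg.2 f₁),
    mul_nonneg (by linarith : (0 : ℝ) ≤ 1 - p₁ - p₂) (sub_nonneg.2 f₂)]

end AbsWalk

noncomputable def walkSurvival (p : ℝ) (k : ℕ) : ℤ → ℕ → ℝ
  | a, 0 => if a = k ∨ a = -k then 0 else 1
  | a, n + 1 =>
    if a = k ∨ a = -k then 0
    else p * walkSurvival p k (a + 1) n + (1 - p) * walkSurvival p k (a - 1) n

section WalkSurvival

variable {p : ℝ} {k : ℕ}

theorem walkSurvival_of_hit {a : ℤ} (ha : a = k ∨ a = -k) (n : ℕ) : walkSurvival p k a n = 0 := by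
  cases n <;> simp [walkSurvival, ha]

theorem walkSurvival_zero {a : ℤ} (ha : ¬(a = k ∨ a = -k)) : walkSurvival p k a 0 = 1 := by
  simp [walkSurvival, ha]

theorem walkSurvival_succ {a : ℤ} (ha : ¬(a = k ∨ a = -k)) (n : ℕ) :
    walkSurvival p k a (n + 1) =
      p * walkSurvival p k (a + 1) n + (1 - p) * walkSurvival p k (a - 1) n := by
  rw [walkSurvival, if_neg ha]

theorem walkSurvival_nonneg (hp₀ : 0 ≤ p) (hp₁ : p ≤ 1) (a : ℤ) (n : ℕ) :
    0 ≤ walkSurvival p k a n := by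
  induction n generalizing a with
  | zero => by_cases ha : a = k ∨ a = -k <;> simp [walkSurvival, ha]
  | succ n ih =>
    by_cases ha : a = k ∨ a = -k
    · rw [walkSurvival_of_hit ha]
    · rw [walkSurvival_succ ha]
      exact add_nonneg (mul_nonneg hp₀ (ih _)) (mul_nonneg (sub_nonneg.2 hp₁) (ih _))

theorem pow_add_pow_mul_absWalkUpProb_succ (hp₀ : 0 < p) (hp₁ : p < 1) (b : ℕ) :
    (p ^ (b + 1) + (1 - p) ^ (b + 1)) * absWalkUpProb p (b + 1) =
      p ^ (b + 2) + (1 - p) ^ (b + 2) := by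
  have hq : 0 < 1 - p := sub_pos.2 hp₁
  rw [absWalkUpProb_of_ne_zero b.succ_ne_zero, mul_div_cancel₀ _ (by positivity)]

theorem pow_mul_walkSurvival_add_pow_mul_walkSurvival_neg (hp₀ : 0 < p) (hp₁ : p < 1) (n : ℕ)
    {a : ℕ} (ha : a ≤ k) :
    p ^ a * walkSurvival p k a n + (1 - p) ^ a * walkSurvival p k (-a) n =
      (p ^ a + (1 - p) ^ a) * birthDeathSurvival (absWalkUpProb p) k a n := by
  induction n generalizing a with
  | zero =>
    rcases ha.eq_or_lt with rfl | hak
    · simp [walkSurvival_of_hit, birthDeathSurvival_of_le]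
    rw [walkSurvival_zero (by omega), walkSurvival_zero (by omega), birthDeathSurvival_zero,
      if_pos hak]
    ring
  | succ n ih =>
    rcases ha.eq_or_lt with rfl | hak
    · simp [walkSurvival_of_hit, birthDeathSurvival_of_le]
    rw [walkSurvival_succ (by omega), walkSurvival_succ (by omega), birthDeathSurvival_succ hak]
    obtain rfl | ⟨b, rfl⟩ : a = 0 ∨ ∃ b, a = b + 1 := by
      rcases a with _ | b <;> simp
    · have h₁ := ih (a := 1) hak
      simp only [absWalkUpProb, if_true]
      push_cast at h₁ ⊢
      linear_combination 2 * h₁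
    · have e₁ : ((b + 1 : ℕ) : ℤ) + 1 = ((b + 2 : ℕ) : ℤ) := by push_cast; ring
      have e₂ : ((b + 1 : ℕ) : ℤ) - 1 = b := by push_cast; ring
      have e₃ : -((b + 1 : ℕ) : ℤ) + 1 = -b := by push_cast; ring
      have e₄ : -((b + 1 : ℕ) : ℤ) - 1 = -((b + 2 : ℕ) : ℤ) := by push_cast; ring
      rw [e₁, e₂, e₃, e₄, Nat.add_sub_cancel]
      linear_combination ih (a := b + 2) hak + p * (1 - p) * ih (a := b) (by omega) -
        (birthDeathSurvival (absWalkUpProb p) k (b + 2) n -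
          birthDeathSurvival (absWalkUpProb p) k b n) * pow_add_pow_mul_absWalkUpProb_succ hp₀ hp₁ b

theorem walkSurvival_zero_eq_birthDeathSurvival (hp₀ : 0 < p) (hp₁ : p < 1) (n : ℕ) :
    walkSurvival p k 0 n = birthDeathSurvival (absWalkUpProb p) k 0 n := by
  have h := pow_mul_walkSurvival_add_pow_mul_walkSurvival_neg hp₀ hp₁ n k.zero_le
  norm_num at h
  linarith

end WalkSurvival

def survivalEvent {Ω : Type*} (X : ℕ → Ω → ℤ) (k : ℕ) (a : ℤ) (n : ℕ) : Set Ω :=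
  {ω | ∀ m ≤ n, ¬(a + walk X m ω = k ∨ a + walk X m ω = -k)}

section Walk

variable {Ω : Type*} {X : ℕ → Ω → ℤ} {k : ℕ}

theorem walk_zero (ω : Ω) : walk X 0 ω = 0 := Finset.sum_range_zero _

theorem walk_succ' (m : ℕ) (ω : Ω) : walk X (m + 1) ω = X 0 ω + walk (fun i => X (i + 1)) m ω := by
  rw [walk, Finset.sum_range_succ', add_comm]
  rfl

theorem natCast_lt_exitTime_iff {n : ℕ} {ω : Ω} :
    (n : ℕ∞) < exitTime X k ω ↔ ∀ m ≤ n, ¬(walk X m ω = k ∨ walk X m ω = -k) := by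
  rw [← ENat.natCast_add_one_le_iff, exitTime, le_sInf_iff]
  constructor
  · intro h m hm hhit
    have := h m ⟨m, rfl, hhit⟩
    norm_cast at this
    omega
  · rintro h _ ⟨m, rfl, hhit⟩
    have : n < m := not_le.1 fun hm => h m hm hhit
    exact_mod_cast this

theorem setOf_natCast_lt_exitTime (n : ℕ) :
    {ω | (n : ℕ∞) < exitTime X k ω} = survivalEvent X k 0 n := by
  ext ω
  simp [survivalEvent, natCast_lt_exitTime_iff]

theorem survivalEvent_eq_empty_of_hit {a : ℤ} (ha : a = k ∨ a = -k) (n : ℕ) :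
    survivalEvent X k a n = ∅ :=
  Set.eq_empty_of_forall_notMem fun ω hω => hω 0 n.zero_le (by simpa [walk_zero] using ha)

theorem setOf_inter_survivalEvent_succ {a c : ℤ} (ha : ¬(a = k ∨ a = -k)) (n : ℕ) :
    {ω | X 0 ω = c} ∩ survivalEvent X k a (n + 1) =
      {ω | X 0 ω = c} ∩ survivalEvent (fun i => X (i + 1)) k (a + c) n := by
  ext ω
  simp only [mem_inter_iff, mem_ofPred_eq, survivalEvent, and_congr_right_iff]
  intro hc
  constructor
  · intro h m hm
    simpa [walk_succ', hc, add_assoc] using h (m + 1) (by omega)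
  · rintro h (_ | m) hm
    · simpa [walk_zero] using ha
    · simpa [walk_succ', hc, add_assoc] using h m (by omega)

end Walk

section Measure

variable {Ω : Type*} [MeasurableSpace Ω] {P : Measure Ω} {X : ℕ → Ω → ℤ} {k : ℕ} {p : ℝ}

theorem measurableSet_survivalEvent (hX : ∀ i, Measurable (X i)) (a : ℤ) (n : ℕ) :
    MeasurableSet (survivalEvent X k a n) := by
  have hwalk (m : ℕ) : Measurable (walk X m) := Finset.measurable_sum _ fun j _ => hX j
  simp only [survivalEvent, ofPred_forall]
  exact MeasurableSet.iInter fun m => MeasurableSet.iInter fun _ =>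
    (measurable_const.add (hwalk m)) (MeasurableSet.of_discrete (s := {x : ℤ | ¬(x = k ∨ x = -k)}))

theorem measure_setOf_head_inter_survivalEvent (hX : ∀ i, Measurable (X i)) (hind : iIndepFun X P)
    (c a : ℤ) (n : ℕ) :
    P ({ω | X 0 ω = c} ∩ survivalEvent (fun i => X (i + 1)) k a n) =
      P {ω | X 0 ω = c} * P (survivalEvent (fun i => X (i + 1)) k a n) := by
  let 𝓜 (i : ℕ) : MeasurableSpace Ω := MeasurableSpace.comap (X i) inferInstance
  have hindep : Indep (𝓜 0) (⨆ i ∈ Ioi 0, 𝓜 i) P := by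
    simpa using indep_iSup_of_disjoint (fun i => (hX i).comap_le)
      ((iIndepFun_iff_iIndep _ _ _).1 hind) (S := {0}) (T := Ioi 0) (by simp)
  refine (Indep_iff _ _ P).1 hindep _ _ ⟨{c}, measurableSet_singleton c, rfl⟩ ?_
  refine @measurableSet_survivalEvent Ω (⨆ i ∈ Ioi 0, 𝓜 i) _ k (fun i => ?_) a n
  exact (comap_measurable (X (i + 1))).mono
    (le_iSup₂ (f := fun i _ => 𝓜 i) (i + 1) i.succ_pos) le_rfl

theorem IsBiasedWalkSteps.shift_s1 (hX : IsBiasedWalkSteps P X p) :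
    IsBiasedWalkSteps P (fun i => X (i + 1)) p :=
  ⟨fun _ => hX.1 _, hX.2.1.precomp (add_left_injective 1), fun _ => hX.2.2.1 _,
    fun _ => hX.2.2.2 _⟩

theorem IsBiasedWalkSteps.measure_compl_step_eq_zero [IsProbabilityMeasure P]
    (hX : IsBiasedWalkSteps P X p) (hp₀ : 0 ≤ p) (hp₁ : p ≤ 1) (i : ℕ) :
    P ({ω | X i ω = 1} ∪ {ω | X i ω = -1})ᶜ = 0 := by
  have hmeas (c : ℤ) : MeasurableSet {ω | X i ω = c} := hX.1 i (measurableSet_singleton c)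
  rw [prob_compl_eq_zero_iff ((hmeas 1).union (hmeas (-1))),
    measure_union (s₁ := {ω | X i ω = 1}) (s₂ := {ω | X i ω = -1})
      ((disjoint_singleton.2 (by decide)).preimage (X i)) (hmeas (-1)),
    hX.2.2.1, hX.2.2.2, ← ENNReal.ofReal_add hp₀ (sub_nonneg.2 hp₁)]
  simp

theorem measure_eq_inter_add_inter {S E F : Set Ω} (hS : MeasurableSet S) (hF : MeasurableSet F)
    (hEF : Disjoint E F) (hae : P (E ∪ F)ᶜ = 0) : P S = P (E ∩ S) + P (F ∩ S) := by
  rw [← measure_inter_conull hae, inter_comm, union_inter_distrib_right,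
    measure_union (hEF.mono inter_subset_left inter_subset_left) (hF.inter hS)]

theorem IsBiasedWalkSteps.measure_survivalEvent [IsProbabilityMeasure P]
    (hX : IsBiasedWalkSteps P X p) (hp₀ : 0 ≤ p) (hp₁ : p ≤ 1) (a : ℤ) (n : ℕ) :
    P (survivalEvent X k a n) = ENNReal.ofReal (walkSurvival p k a n) := by
  induction n generalizing X a with
  | zero =>
    by_cases ha : a = k ∨ a = -k
    · simp [survivalEvent_eq_empty_of_hit ha, walkSurvival_of_hit ha]
    · have : survivalEvent X k a 0 = univ := by
        ext ω; simpa [survivalEvent, walk_zero] using ha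
      simp [this, walkSurvival_zero ha]
  | succ n ih =>
    by_cases ha : a = k ∨ a = -k
    · simp [survivalEvent_eq_empty_of_hit ha, walkSurvival_of_hit ha]
    have hstep (c : ℤ) := measure_setOf_head_inter_survivalEvent (k := k) hX.1 hX.2.1 c (a + c) n
    rw [measure_eq_inter_add_inter (E := {ω | X 0 ω = 1}) (F := {ω | X 0 ω = -1})
        (measurableSet_survivalEvent hX.1 a _) (hX.1 0 (measurableSet_singleton (-1)))
        ((disjoint_singleton.2 (by decide)).preimage (X 0))
        (hX.measure_compl_step_eq_zero hp₀ hp₁ 0),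
      setOf_inter_survivalEvent_succ ha, setOf_inter_survivalEvent_succ ha, hstep, hstep,
      ih hX.shift_s1, ih hX.shift_s1, hX.2.2.1, hX.2.2.2, walkSurvival_succ ha,
      ← ENNReal.ofReal_mul hp₀, ← ENNReal.ofReal_mul (sub_nonneg.2 hp₁),
      ← ENNReal.ofReal_add (mul_nonneg hp₀ (walkSurvival_nonneg hp₀ hp₁ _ _))
        (mul_nonneg (sub_nonneg.2 hp₁) (walkSurvival_nonneg hp₀ hp₁ _ _)), sub_eq_add_neg a]

end Measure

theorem rw_exit_time_stochastically_increasing_general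
    {Ω₁ Ω₂ : Type*} [MeasurableSpace Ω₁] [MeasurableSpace Ω₂]
    (P₁ : Measure Ω₁) (P₂ : Measure Ω₂)
    [IsProbabilityMeasure P₁] [IsProbabilityMeasure P₂]
    {p₁ p₂ : ℝ} (h₁ : 0 < p₁) (h₁₂ : p₁ < p₂) (h₂ : p₂ ≤ 1 / 2)
    (X₁ : ℕ → Ω₁ → ℤ) (X₂ : ℕ → Ω₂ → ℤ)
    (hX₁ : IsBiasedWalkSteps P₁ X₁ p₁) (hX₂ : IsBiasedWalkSteps P₂ X₂ p₂)
    (k : ℕ) (n : ℕ) :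
    P₁ {ω | (n : ℕ∞) < exitTime X₁ k ω} ≤ P₂ {ω | (n : ℕ∞) < exitTime X₂ k ω} := by
  have hp₂ : 0 < p₂ := h₁.trans h₁₂
  rw [setOf_natCast_lt_exitTime, setOf_natCast_lt_exitTime,
    hX₁.measure_survivalEvent h₁.le (by linarith), hX₂.measure_survivalEvent hp₂.le (by linarith)]
  refine ENNReal.ofReal_le_ofReal ?_
  rw [walkSurvival_zero_eq_birthDeathSurvival h₁ (by linarith),
    walkSurvival_zero_eq_birthDeathSurvival hp₂ (by linarith)]
  exact birthDeathSurvival_le_of_le (fun a => (absWalkUpProb_mem_Icc h₁ (by linarith) a).2)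
    (absWalkUpProb_mem_Icc hp₂ (by linarith)) (absWalkUpProb_monotoneOn hp₂ (by linarith))
    (absWalkUpProb_anti h₁ h₁₂.le h₂) n 0

/-- For `0 < p₁ < p₂ ≤ 1/2`, the exit time of the `p₂`-biased random walk
from `(-k, k)` stochastically dominates that of the `p₁`-biased walk:
`ℙ(σ_{p₁}^k > n) ≤ ℙ(σ_{p₂}^k > n)` for all `n`. -/
theorem rw_exit_time_stochastically_increasing
    {Ω₁ Ω₂ : Type*} [MeasurableSpace Ω₁] [MeasurableSpace Ω₂]
    (P₁ : Measure Ω₁) (P₂ : Measure Ω₂)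
    [IsProbabilityMeasure P₁] [IsProbabilityMeasure P₂]
    {p₁ p₂ : ℝ} (h₁ : 0 < p₁) (h₁₂ : p₁ < p₂) (h₂ : p₂ ≤ 1 / 2)
    (X₁ : ℕ → Ω₁ → ℤ) (X₂ : ℕ → Ω₂ → ℤ)
    (hX₁ : IsBiasedWalkSteps P₁ X₁ p₁) (hX₂ : IsBiasedWalkSteps P₂ X₂ p₂)
    (k : ℕ) (hk : 0 < k) (n : ℕ) :
    P₁ {ω | (n : ℕ∞) < exitTime X₁ k ω} ≤ P₂ {ω | (n : ℕ∞) < exitTime X₂ k ω} :=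
  rw_exit_time_stochastically_increasing_general P₁ P₂ h₁ h₁₂ h₂ X₁ X₂ hX₁ hX₂ k n
end

section
/- Independence of exit position and exit time for biased random walk: Let p ∈ (0,1), let S be the biased simple random walk started at 0 with up-step probability p, fix a positive integer k, and let σ = inf{n : S_n = ±k}. Then under the law ℚ_p of the biased walk, the random variables S_σ (the exit position, taking values ±k) and σ (the exit time) are independent. -/
open MeasureTheory ProbabilityTheory

/-- The natural filtration `ℱ_n = σ(X_1, …, X_n)` of the steps. -/
def rwFilt {Ω : Type*} (X : ℕ → Ω → ℤ) (n : ℕ) : MeasurableSpace Ω :=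
  ⨆ j ∈ Finset.range n, MeasurableSpace.comap (X j) inferInstance

/-- The stopped σ-algebra `ℱ_σ = {A : A ∩ {σ ≤ n} ∈ ℱ_n for all n}` (this family is already
a σ-algebra, so generating from it gives exactly `ℱ_σ`). -/
def stoppedSigmaRW {Ω : Type*} (X : ℕ → Ω → ℤ) (σ : Ω → ℕ∞) : MeasurableSpace Ω :=
  MeasurableSpace.generateFrom
    {A | ∀ n : ℕ, MeasurableSet[rwFilt X n] (A ∩ {ω | σ ω ≤ (n : ℕ∞)})}

/-
Flipping every sign of a ±1 path of length `n` maps the paths that first leave `(-k, k)` at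
time `n` through `k` bijectively onto those that do so through `-k`, and, since such a path has
`k` more up-steps than down-steps, it multiplies the path's probability `p^#up q^#down` by
`(q/p)^k`. Hence `P(σ = n, S_σ = k) q^k = P(σ = n, S_σ = -k) p^k` for every `n`: given `σ = n`,
the exit position is `k` or `-k` with odds `p^k : q^k`, whatever `n` is. Since moreover `σ < ∞`
almost surely (any run of `2k` consecutive up-steps forces an exit, and disjoint runs are
independent with probability `p^(2k)` each), `S_σ` and `σ` are independent.
-/

open scoped ENNReal

namespace RandomWalkExit

lemma indepFun_of_measure_inter_preimage_singleton {Ω α β : Type*} [MeasurableSpace Ω]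
    [MeasurableSpace α] [MeasurableSingletonClass α] [Countable α]
    [MeasurableSpace β] [MeasurableSingletonClass β] [Countable β]
    {μ : Measure Ω} [IsProbabilityMeasure μ] {f : Ω → α} {g : Ω → β}
    (hf : Measurable f) (hg : Measurable g) (ρ : α → ℝ≥0∞)
    (h : ∀ a b, μ (f ⁻¹' {a} ∩ g ⁻¹' {b}) = ρ a * μ (g ⁻¹' {b})) :
    IndepFun f g μ := by
  have hfibers (ν : Measure Ω) : ∑' b : (Set.univ : Set β), ν (g ⁻¹' {↑b}) = ν Set.univ := by
    rw [tsum_measure_preimage_singleton Set.countable_univ fun b _ => hg (.singleton b),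
      Set.preimage_univ]
  have hρ (a : α) : μ (f ⁻¹' {a}) = ρ a := by
    have := hfibers (μ.restrict (f ⁻¹' {a}))
    simp only [Measure.restrict_apply (hg (.singleton _)), Set.inter_comm _ (f ⁻¹' {a}), h,
      ENNReal.tsum_mul_left, hfibers μ, measure_univ, mul_one, Measure.restrict_apply_univ] at this
    exact this.symm
  rw [indepFun_iff_map_prod_eq_prod_map_map hf.aemeasurable hg.aemeasurable,
    Measure.ext_iff_singleton]
  rintro ⟨a, b⟩
  rw [Measure.map_apply (hf.prodMk hg) (.singleton _), ← Set.singleton_prod_singleton,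
    Measure.prod_prod, Measure.map_apply hf (.singleton a), Measure.map_apply hg (.singleton b),
    Set.mk_preimage_prod, h, hρ]

section Deterministic

variable {Ω Ω' : Type*} {X : ℕ → Ω → ℤ} {Y : ℕ → Ω' → ℤ} {k n : ℕ} {ω : Ω} {ω' : Ω'}

lemma walk_zero : walk X 0 ω = 0 := Finset.sum_range_zero _

lemma walk_succ : walk X (n + 1) ω = walk X n ω + X n ω := Finset.sum_range_succ _ _

lemma walk_neg : walk (fun j ω => -X j ω) n ω = -walk X n ω := Finset.sum_neg_distrib _

lemma walk_congr (h : ∀ j < n, X j ω = Y j ω') {m : ℕ} (hm : m ≤ n) :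
    walk X m ω = walk Y m ω' :=
  Finset.sum_congr rfl fun j hj => h j (by grind)

lemma exitTime_eq_sInf :
    exitTime X k ω = sInf (Nat.cast '' {m : ℕ | |walk X m ω| = k}) := by
  simp only [exitTime, abs_eq (Int.natCast_nonneg k), Set.image, eq_comm (a := (_ : ℕ∞))]
  grind

lemma exitTime_neg : exitTime (fun j ω => -X j ω) k ω = exitTime X k ω := by
  simp only [exitTime_eq_sInf, walk_neg, abs_neg]

lemma exitTime_eq_top_iff : exitTime X k ω = ⊤ ↔ ∀ m, |walk X m ω| ≠ k := by
  simp [exitTime_eq_sInf]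

lemma exitTime_eq_coe_iff :
    exitTime X k ω = n ↔ |walk X n ω| = k ∧ ∀ m < n, |walk X m ω| ≠ k := by
  rw [exitTime_eq_sInf]
  constructor
  · intro h
    have hne : (Nat.cast '' {m : ℕ | |walk X m ω| = k} : Set ℕ∞).Nonempty := by
      by_contra hempty
      simp [Set.not_nonempty_iff_eq_empty.1 hempty] at h
    obtain ⟨m, hm, hmn⟩ := h ▸ csInf_mem hne
    obtain rfl : m = n := by exact_mod_cast hmn
    refine ⟨hm, fun j hj hjk => ?_⟩
    have := h ▸ csInf_le (OrderBot.bddBelow _) (Set.mem_image_of_mem Nat.cast hjk)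
    exact absurd (by exact_mod_cast this) (not_le.2 hj)
  · rintro ⟨hn, hmin⟩
    refine IsLeast.csInf_eq ⟨Set.mem_image_of_mem _ hn, ?_⟩
    rintro _ ⟨m, hm, rfl⟩
    exact Nat.cast_le.2 (not_lt.1 fun hlt => hmin m hlt hm)

def exitEvent (X : ℕ → Ω → ℤ) (k n : ℕ) (v : ℤ) : Set Ω :=
  {ω | exitTime X k ω = n ∧ walk X n ω = v}

lemma mem_exitEvent_congr (h : ∀ j < n, X j ω = Y j ω') {v : ℤ} :
    ω ∈ exitEvent X k n v ↔ ω' ∈ exitEvent Y k n v := by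
  have hwalk := fun m (hm : m ≤ n) => walk_congr h hm
  simp only [exitEvent, Set.mem_ofPred_eq, exitTime_eq_coe_iff]
  grind

lemma exitEvent_neg {v : ℤ} : exitEvent (fun j ω => -X j ω) k n v = exitEvent X k n (-v) := by
  ext ω
  simp only [exitEvent, Set.mem_ofPred_eq, exitTime_neg, walk_neg, neg_eq_iff_eq_neg]

lemma exitEvent_eq_empty {v : ℤ} (hv : |v| ≠ k) : exitEvent X k n v = ∅ :=
  Set.eq_empty_of_forall_notMem fun _ ⟨hn, hv'⟩ => hv (hv' ▸ (exitTime_eq_coe_iff.1 hn).1)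

lemma setOf_exitTime_eq_coe :
    {ω | exitTime X k ω = n} = exitEvent X k n k ∪ exitEvent X k n (-k) := by
  ext ω
  simp only [exitEvent, Set.mem_ofPred_eq, Set.mem_union, ← and_or_left,
    ← abs_eq (Int.natCast_nonneg k)]
  exact ⟨fun h => ⟨h, (exitTime_eq_coe_iff.1 h).1⟩, And.left⟩

lemma disjoint_exitEvent_neg (hk : 0 < k) :
    Disjoint (exitEvent X k n k) (exitEvent X k n (-k)) :=
  Set.disjoint_left.2 fun _ ⟨_, h⟩ ⟨_, h'⟩ => by omega

lemma exitPosition_preimage_inter_exitTime_preimage (v : ℤ) :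
    (fun ω => walk X (exitTime X k ω).toNat ω) ⁻¹' {v} ∩ exitTime X k ⁻¹' {(n : ℕ∞)}
      = exitEvent X k n v := by
  ext ω
  simp only [exitEvent, Set.mem_inter_iff, Set.mem_preimage, Set.mem_singleton_iff,
    Set.mem_ofPred_eq]
  constructor
  · rintro ⟨hv, hn⟩
    exact ⟨hn, by simpa [hn] using hv⟩
  · rintro ⟨hn, hv⟩
    exact ⟨by simpa [hn] using hv, hn⟩

def boolStep (b : Bool) : ℤ := bif b then 1 else -1

lemma boolStep_not (b : Bool) : boolStep (!b) = -boolStep b := by cases b <;> rfl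

open Finset in
lemma prod_cond_mul_pow {ι R : Type*} [Fintype ι] [CommSemiring R] (ε : ι → Bool) (c d : R)
    (h : ∑ i, boolStep (ε i) = k) :
    (∏ i, cond (ε i) c d) * d ^ k = (∏ i, cond (!ε i) c d) * c ^ k := by
  classical
  simp only [boolStep, Bool.cond_eq_ite] at h ⊢
  rw [sum_ite, sum_const, sum_const] at h
  simp only [Bool.not_eq_true', prod_ite, prod_const]
  simp only [Int.nsmul_eq_mul, mul_one, Bool.not_eq_true, Int.reduceNeg, mul_neg,
    Bool.not_eq_false] at h ⊢
  have hcount : #{i | ε i = true} = #{i | ε i = false} + k := by omega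
  rw [hcount]
  ring

/-- The step process of a sign path `ε` of length `n`, padded with zero steps after time `n`. -/
def pathStep (n j : ℕ) (ε : Fin n → Bool) : ℤ :=
  if h : j < n then boolStep (ε ⟨j, h⟩) else 0

lemma walk_pathStep (ε : Fin n → Bool) : walk (pathStep n) n ε = ∑ j, boolStep (ε j) := by
  rw [walk, ← Fin.sum_univ_eq_sum_range (pathStep n · ε)]
  exact Finset.sum_congr rfl fun j _ => dif_pos j.isLt

lemma pathStep_not (j : ℕ) (ε : Fin n → Bool) :
    pathStep n j (fun i => !ε i) = -pathStep n j ε := by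
  unfold pathStep
  split_ifs
  exacts [boolStep_not _, neg_zero.symm]

lemma bnot_mem_exitEvent_pathStep_iff {ε : Fin n → Bool} {v : ℤ} :
    (fun i => !ε i) ∈ exitEvent (pathStep n) k n v ↔ ε ∈ exitEvent (pathStep n) k n (-v) := by
  rw [← exitEvent_neg]
  exact mem_exitEvent_congr fun j _ => pathStep_not j ε

def upRun (X : ℕ → Ω → ℤ) (a l : ℕ) : Set Ω := ⋂ j ∈ Finset.Ico a (a + l), X j ⁻¹' {1}

lemma walk_mem_Ioo (hstep : ∀ j, X j ω = 1 ∨ X j ω = -1) (hne : ∀ m, |walk X m ω| ≠ k)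
    (m : ℕ) : walk X m ω ∈ Set.Ioo (-(k : ℤ)) k := by
  rw [Set.mem_Ioo]
  have hne' : ∀ m, walk X m ω ≠ k ∧ walk X m ω ≠ -k := fun m => by
    simpa [abs_eq (Int.natCast_nonneg k), not_or] using hne m
  induction m with
  | zero => have := hne' 0; simp only [walk_zero] at this ⊢; omega
  | succ m ih => have := hne' (m + 1); have := hstep m; rw [walk_succ] at *; omega

lemma walk_add_of_mem_upRun {a l : ℕ} (h : ω ∈ upRun X a l) :
    walk X (a + l) ω = walk X a ω + l := by
  simp only [upRun, Set.mem_iInter, Set.mem_preimage, Set.mem_singleton_iff] at h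
  rw [walk, walk, ← Finset.sum_range_add_sum_Ico _ (Nat.le_add_right a l),
    Finset.sum_congr rfl h]
  simp

lemma notMem_upRun (hstep : ∀ j, X j ω = 1 ∨ X j ω = -1) (hne : ∀ m, |walk X m ω| ≠ k)
    (a : ℕ) : ω ∉ upRun X a (2 * k) := fun h => by
  have := walk_add_of_mem_upRun h
  obtain ⟨_, _⟩ := walk_mem_Ioo hstep hne a
  obtain ⟨_, _⟩ := walk_mem_Ioo hstep hne (a + 2 * k)
  push_cast at *
  omega

lemma measurableSet_upRun_iSup_comap {S : Set ℕ} {a l : ℕ}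
    (hS : ∀ j ∈ Finset.Ico a (a + l), j ∈ S) :
    MeasurableSet[⨆ i ∈ S, MeasurableSpace.comap (X i) inferInstance] (upRun X a l) :=
  Finset.measurableSet_biInter _ fun j hj =>
    le_iSup₂ (f := fun i (_ : i ∈ S) => MeasurableSpace.comap (X i) inferInstance) j (hS j hj) _
      ⟨{1}, .singleton 1, rfl⟩

end Deterministic

section Probability

variable {Ω : Type*} [MeasurableSpace Ω] {P : Measure Ω} {X : ℕ → Ω → ℤ} {p : ℝ} {k n : ℕ}

lemma measurable_walk (hX : ∀ i, Measurable (X i)) (n : ℕ) : Measurable (walk X n) :=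
  Finset.measurable_sum _ fun i _ => hX i

lemma measurable_exitTime (hX : ∀ i, Measurable (X i)) : Measurable (exitTime X k) := by
  have hhit : ∀ m, MeasurableSet {ω | |walk X m ω| = k} := fun m =>
    measurable_walk hX m (.of_discrete (s := {v : ℤ | |v| = k}))
  refine measurable_to_countable' fun t => ?_
  cases t with
  | top =>
    simp only [Set.preimage, Set.mem_singleton_iff, exitTime_eq_top_iff, Set.ofPred_forall]
    exact .iInter fun m => (hhit m).compl
  | coe n =>
    simp only [Set.preimage, Set.mem_singleton_iff, exitTime_eq_coe_iff, Set.ofPred_and,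
      Set.ofPred_forall]
    exact (hhit n).inter (.iInter fun m => .iInter fun _ => (hhit m).compl)

lemma measurable_exitPosition (hX : ∀ i, Measurable (X i)) :
    Measurable fun ω => walk X (exitTime X k ω).toNat ω :=
  (measurable_from_prod_countable_left (f := fun q : Ω × ℕ∞ => walk X q.2.toNat q.1)
    fun t => measurable_walk hX t.toNat).comp (measurable_id.prodMk (measurable_exitTime hX))

lemma measurableSet_exitEvent (hX : ∀ i, Measurable (X i)) (v : ℤ) :
    MeasurableSet (exitEvent X k n v) :=
  (measurable_exitTime hX (.singleton (n : ℕ∞))).inter (measurable_walk hX n (.singleton v))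

lemma ae_step_eq_one_or_neg_one [IsProbabilityMeasure P] (hp : 0 ≤ p) (hp1 : p ≤ 1)
    (hX : IsBiasedWalkSteps P X p) : ∀ᵐ ω ∂P, ∀ j, X j ω = 1 ∨ X j ω = -1 := by
  refine ae_all_iff.2 fun j => ?_
  have hmeas : ∀ v : ℤ, MeasurableSet {ω | X j ω = v} := fun v => hX.1 j (.singleton v)
  have hunion : {ω | X j ω = 1 ∨ X j ω = -1} = {ω | X j ω = 1} ∪ {ω | X j ω = -1} := rfl
  refine (ae_iff_measure_eq (hunion ▸ ((hmeas 1).union (hmeas (-1))).nullMeasurableSet)).2 ?_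
  have hdisj : Disjoint {ω | X j ω = 1} {ω | X j ω = -1} :=
    Set.disjoint_left.2 fun ω h h' => by simp_all
  rw [hunion, measure_union hdisj (hmeas (-1)), hX.2.2.1 j, hX.2.2.2 j,
    ← ENNReal.ofReal_add hp (by linarith), add_sub_cancel, ENNReal.ofReal_one, measure_univ]

def stepSigns (X : ℕ → Ω → ℤ) (n : ℕ) (ω : Ω) : Fin n → Bool := fun j => X j ω = 1

noncomputable def pathWeight (p : ℝ) (ε : Fin n → Bool) : ℝ≥0∞ :=
  ∏ j, cond (ε j) (ENNReal.ofReal p) (ENNReal.ofReal (1 - p))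

lemma measurable_stepSigns (hX : ∀ i, Measurable (X i)) : Measurable (stepSigns X n) :=
  measurable_pi_lambda _ fun j =>
    (Measurable.of_discrete (f := fun v : ℤ => decide (v = 1))).comp (hX j)

lemma measure_stepSigns_preimage_singleton [IsProbabilityMeasure P] (hp : 0 ≤ p)
    (hX : IsBiasedWalkSteps P X p) (ε : Fin n → Bool) :
    P (stepSigns X n ⁻¹' {ε}) = pathWeight p ε := by
  have hset : stepSigns X n ⁻¹' {ε}
      = ⋂ j ∈ (Finset.univ : Finset (Fin n)), X j ⁻¹' cond (ε j) {1} {1}ᶜ := by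
    ext ω
    simp only [Set.mem_preimage, Set.mem_singleton_iff, funext_iff, stepSigns,
      Finset.mem_univ, Set.iInter_true, Set.mem_iInter]
    refine forall_congr' fun j => ?_
    cases ε j <;> simp
  rw [hset, (hX.2.1.precomp Fin.val_injective).measure_inter_preimage_eq_mul _
    fun j _ => .of_discrete]
  refine Finset.prod_congr rfl fun j _ => ?_
  cases ε j
  · rw [cond_false, cond_false, Set.preimage_compl,
      measure_compl (hX.1 j (.singleton 1)) (measure_ne_top _ _), measure_univ,
      show P (X j ⁻¹' {1}) = _ from hX.2.2.1 j, ENNReal.ofReal_sub 1 hp, ENNReal.ofReal_one]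
  · exact hX.2.2.1 j

lemma measure_stepSigns_preimage [IsProbabilityMeasure P] (hp : 0 ≤ p)
    (hX : IsBiasedWalkSteps P X p) (A : Set (Fin n → Bool)) :
    P (stepSigns X n ⁻¹' A) = ∑ ε, A.indicator (pathWeight p) ε := by
  rw [← tsum_measure_preimage_singleton A.to_countable
      fun ε _ => measurable_stepSigns hX.1 (.singleton ε),
    tsum_subtype A fun ε => P (stepSigns X n ⁻¹' {ε}), tsum_fintype,
    funext (measure_stepSigns_preimage_singleton hp hX)]

lemma stepSigns_preimage_ae_eq_exitEvent [IsProbabilityMeasure P] (hp : 0 ≤ p) (hp1 : p ≤ 1)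
    (hX : IsBiasedWalkSteps P X p) (v : ℤ) :
    stepSigns X n ⁻¹' exitEvent (pathStep n) k n v =ᵐ[P] exitEvent X k n v := by
  filter_upwards [ae_step_eq_one_or_neg_one hp hp1 hX] with ω hω
  refine propext (mem_exitEvent_congr fun j hj => ?_).symm
  rw [pathStep, dif_pos hj]
  rcases hω j with h | h <;> simp [stepSigns, boolStep, h]

lemma measure_exitEvent [IsProbabilityMeasure P] (hp : 0 ≤ p) (hp1 : p ≤ 1)
    (hX : IsBiasedWalkSteps P X p) (v : ℤ) :
    P (exitEvent X k n v) = ∑ ε, (exitEvent (pathStep n) k n v).indicator (pathWeight p) ε := by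
  rw [← measure_congr (stepSigns_preimage_ae_eq_exitEvent hp hp1 hX v),
    measure_stepSigns_preimage hp hX]

lemma sum_indicator_pathWeight_mul_eq (p : ℝ) (k n : ℕ) :
    (∑ ε, (exitEvent (pathStep n) k n k).indicator (pathWeight p) ε) * ENNReal.ofReal (1 - p) ^ k
      = (∑ ε, (exitEvent (pathStep n) k n (-k)).indicator (pathWeight p) ε)
          * ENNReal.ofReal p ^ k := by
  have hflip : Function.Involutive fun (ε : Fin n → Bool) i => !ε i :=
    fun ε => funext fun i => Bool.not_not _
  rw [Finset.sum_mul, Finset.sum_mul]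
  refine Fintype.sum_bijective _ hflip.bijective _ _ fun ε => ?_
  by_cases hε : ε ∈ exitEvent (pathStep n) k n k
  · rw [Set.indicator_of_mem hε,
      Set.indicator_of_mem (bnot_mem_exitEvent_pathStep_iff.2 (by rwa [neg_neg]))]
    exact prod_cond_mul_pow ε _ _ (walk_pathStep ε ▸ hε.2)
  · rw [Set.indicator_of_notMem hε,
      Set.indicator_of_notMem (by rwa [bnot_mem_exitEvent_pathStep_iff, neg_neg]), zero_mul,
      zero_mul]

lemma measure_exitEvent_mul_eq [IsProbabilityMeasure P] (hp : 0 ≤ p) (hp1 : p ≤ 1)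
    (hX : IsBiasedWalkSteps P X p) :
    P (exitEvent X k n k) * ENNReal.ofReal (1 - p) ^ k
      = P (exitEvent X k n (-k)) * ENNReal.ofReal p ^ k := by
  rw [measure_exitEvent hp hp1 hX, measure_exitEvent hp hp1 hX]
  exact sum_indicator_pathWeight_mul_eq p k n

noncomputable def exitOdds (p : ℝ) (k : ℕ) (v : ℤ) : ℝ≥0∞ :=
  if v = k then ENNReal.ofReal p ^ k else if v = -k then ENNReal.ofReal (1 - p) ^ k else 0

lemma measure_exitEvent_mul_add [IsProbabilityMeasure P] (hp : 0 ≤ p) (hp1 : p ≤ 1)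
    (hX : IsBiasedWalkSteps P X p) (hk : 0 < k) (v : ℤ) :
    P (exitEvent X k n v) * (ENNReal.ofReal p ^ k + ENNReal.ofReal (1 - p) ^ k)
      = exitOdds p k v * P {ω | exitTime X k ω = n} := by
  have hreflect := measure_exitEvent_mul_eq (k := k) (n := n) hp hp1 hX
  rw [setOf_exitTime_eq_coe,
    measure_union (disjoint_exitEvent_neg hk) (measurableSet_exitEvent hX.1 _), exitOdds]
  split_ifs with hpos hneg
  · rw [hpos, mul_add, hreflect]; ring
  · rw [hneg, mul_add, ← hreflect]; ring
  · rw [exitEvent_eq_empty (by rw [Ne, abs_eq (Int.natCast_nonneg k)]; tauto), measure_empty,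
      zero_mul, zero_mul]

lemma measure_upRun [IsProbabilityMeasure P] (hX : IsBiasedWalkSteps P X p) (a l : ℕ) :
    P (upRun X a l) = ENNReal.ofReal p ^ l := by
  rw [upRun, hX.2.1.measure_inter_preimage_eq_mul _ fun _ _ => .singleton 1,
    Finset.prod_congr rfl fun i _ => show P (X i ⁻¹' {1}) = _ from hX.2.2.1 i,
    Finset.prod_const, Nat.card_Ico, Nat.add_sub_cancel_left]

lemma measure_iInter_upRun_compl [IsProbabilityMeasure P] (hX : IsBiasedWalkSteps P X p)
    (l M : ℕ) :
    P (⋂ m ∈ Finset.range M, (upRun X (l * m) l)ᶜ) = (1 - ENNReal.ofReal p ^ l) ^ M := by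
  induction M with
  | zero => simp
  | succ M ih =>
    have hindep := indep_iSup_of_disjoint (fun i => (hX.1 i).comap_le)
      ((iIndepFun_iff_iIndep _ _ _).1 hX.2.1)
      (Set.disjoint_left.2 fun i (hi : i < l * M) (hi' : l * M ≤ i) => by omega)
    have hpast : MeasurableSet[⨆ i ∈ {i | i < l * M}, MeasurableSpace.comap (X i) inferInstance]
        (⋂ m ∈ Finset.range M, (upRun X (l * m) l)ᶜ) :=
      Finset.measurableSet_biInter _ fun m hm => MeasurableSet.compl <|
        measurableSet_upRun_iSup_comap fun j hj => by
          have := Nat.mul_le_mul_left l (Finset.mem_range.1 hm)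
          grind
    have hfuture : MeasurableSet[⨆ i ∈ {i | l * M ≤ i},
        MeasurableSpace.comap (X i) inferInstance] (upRun X (l * M) l)ᶜ :=
      MeasurableSet.compl <| measurableSet_upRun_iSup_comap fun j hj =>
        (Finset.mem_Ico.1 hj).1
    have hmeas : MeasurableSet (upRun X (l * M) l) :=
      Finset.measurableSet_biInter _ fun j _ => hX.1 j (.singleton 1)
    rw [Finset.range_add_one, Finset.set_biInter_insert, Set.inter_comm,
      (Indep_iff _ _ _).1 hindep _ _ hpast hfuture, ih,
      measure_compl hmeas (measure_ne_top _ _), measure_univ, measure_upRun hX, pow_succ]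

lemma measure_exitTime_eq_top [IsProbabilityMeasure P] (hp : 0 < p) (hp1 : p ≤ 1)
    (hX : IsBiasedWalkSteps P X p) : P {ω | exitTime X k ω = ⊤} = 0 := by
  have hbound : ∀ M, P {ω | exitTime X k ω = ⊤} ≤ (1 - ENNReal.ofReal p ^ (2 * k)) ^ M := by
    intro M
    rw [← measure_iInter_upRun_compl hX (2 * k) M]
    refine measure_mono_ae ?_
    filter_upwards [ae_step_eq_one_or_neg_one hp.le hp1 hX] with ω hstep hσ
    exact Set.mem_iInter₂.2 fun m _ => notMem_upRun hstep (exitTime_eq_top_iff.1 hσ) _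
  refine le_antisymm (ge_of_tendsto' (ENNReal.tendsto_pow_atTop_nhds_zero_of_lt_one ?_) hbound)
    zero_le
  exact ENNReal.sub_lt_self ENNReal.one_ne_top one_ne_zero
    (pow_ne_zero _ (ENNReal.ofReal_pos.2 hp).ne')

end Probability

end RandomWalkExit

open RandomWalkExit in
/-- Independence of exit position and exit time for biased random walk:
for `p ∈ (0,1)` and a positive integer `k`, under the law of the `p`-biased walk the exit
position `S_σ` and the exit time `σ = inf {n : S_n = ±k}` are independent. -/
theorem rw_exit_position_time_independent
    {Ω : Type*} [MeasurableSpace Ω] (P : Measure Ω) [IsProbabilityMeasure P]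
    (X : ℕ → Ω → ℤ) {p : ℝ} (hp : 0 < p) (hp1 : p < 1)
    (hX : IsBiasedWalkSteps P X p) (k : ℕ) (hk : 0 < k) :
    IndepFun (fun ω => walk X (exitTime X k ω).toNat ω) (fun ω => exitTime X k ω) P := by
  set odds := ENNReal.ofReal p ^ k + ENNReal.ofReal (1 - p) ^ k
  have hodds : odds ≠ 0 := fun h => pow_ne_zero k (ENNReal.ofReal_pos.2 hp).ne' (add_eq_zero.1 h).1
  have hodds' : odds ≠ ⊤ := by finiteness
  refine indepFun_of_measure_inter_preimage_singleton (measurable_exitPosition hX.1)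
    (measurable_exitTime hX.1) (fun v => exitOdds p k v / odds) fun v t => ?_
  cases t with
  | top =>
    have hnull : P ((fun ω => exitTime X k ω) ⁻¹' {⊤}) = 0 := measure_exitTime_eq_top hp hp1.le hX
    rw [measure_mono_null Set.inter_subset_right hnull, hnull, mul_zero]
  | coe n =>
    rw [exitPosition_preimage_inter_exitTime_preimage, ← ENNReal.mul_div_right_comm,
      ENNReal.eq_div_iff hodds hodds', mul_comm, measure_exitEvent_mul_add hp.le hp1.le hX hk]
    rfl
end
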